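/- arXiv:2605.23106 — 2 statements merged into one kernel-verified Lean document; each statement's English description precedes it below -/
import Mathlib

section
/- Let X be a real Banach space and I : X → ℝ a continuously Fréchet differentiable functional with I(0) = 0. Assume: (G1) there exist ρ > 0 and a > 0 such that I(u) ≥ a for every u ∈ X with ‖u‖ = ρ; (G2) there exists e ∈ X with ‖e‖ > ρ and I(e) ≤ 0; (PS) every sequence (u_k) in X for which (I(u_k)) is bounded in ℝ and ‖I′(u_k)‖_{X*} → 0 admits a subsequence converging in X. Let Γ denote the set of continuous maps g : [0,1] → X with g(0) = 0 and g(1) = e, and set c := inf_{g ∈ Γ} max_{t ∈ [0,1]} I(g(t)). Then c is a critical value of I: there exists w ∈ X with I(w) = c and I′(w) = 0. -/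
/-!
Apply Ekeland's variational principle with slope `ε / 3` to `g ↦ max (I ∘ g)` on the complete
metric space of paths from `0` to `e`: this gives a path whose maximum is within `ε` of `c` and
which no nearby path improves at rate more than `ε / 3`. If `‖I'‖ > ε` wherever `|I - c| ≤ ε`,
pushing that path along a pseudo-gradient field would lower its maximum at rate `ε / 2`. Hence
there are `u` with `I u → c` and `I' u → 0`, and by the Palais–Smale condition a subsequence
converges to a critical point at level `c`. Every path crosses the sphere `‖u‖ = ρ`, so
`c ≥ a > 0 ≥ max (I 0) (I e)`, which keeps the endpoints fixed under the deformation.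
-/

open Filter Topology Set Metric

section Ekeland

variable {α : Type*} [MetricSpace α] {f : α → ℝ} {ε : ℝ}

def ekelandSet (f : α → ℝ) (ε : ℝ) (x : α) : Set α := {y | f y + ε * dist x y ≤ f x}

lemma mem_ekelandSet {x y : α} : y ∈ ekelandSet f ε x ↔ f y + ε * dist x y ≤ f x := Iff.rfl

lemma mem_ekelandSet_self (x : α) : x ∈ ekelandSet f ε x := by simp [mem_ekelandSet]

lemma ekelandSet_subset (hε : 0 ≤ ε) {x y : α} (hy : y ∈ ekelandSet f ε x) :
    ekelandSet f ε y ⊆ ekelandSet f ε x := fun z hz => by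
  rw [mem_ekelandSet] at hy hz ⊢
  have := mul_le_mul_of_nonneg_left (dist_triangle x y z) hε
  linarith

lemma isClosed_ekelandSet (hf : LowerSemicontinuous f) (x : α) : IsClosed (ekelandSet f ε x) :=
  (hf.add (continuous_const.mul (continuous_const.dist continuous_id)).lowerSemicontinuous
    ).isClosed_preimage (f x)

lemma mul_dist_le_of_le_sInf_add (hε : 0 ≤ ε) {x x' y : α} {r : ℝ}
    (hbdd : BddBelow (f '' ekelandSet f ε x)) (hx' : x' ∈ ekelandSet f ε x)
    (hx'r : f x' ≤ sInf (f '' ekelandSet f ε x) + r) (hy : y ∈ ekelandSet f ε x') :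
    ε * dist x' y ≤ r := by
  have hinf : sInf (f '' ekelandSet f ε x) ≤ f y :=
    csInf_le hbdd (mem_image_of_mem f (ekelandSet_subset hε hx' hy))
  rw [mem_ekelandSet] at hy
  linarith

-- Ekeland's variational principle: nested sets `ekelandSet f ε xₙ`, with `f xₙ₊₁` almost minimal
-- on the previous one, shrink to the required point.
theorem LowerSemicontinuous.exists_le_forall_le_add_mul_dist [CompleteSpace α]
    (hf : LowerSemicontinuous f) (hbdd : BddBelow (range f)) (hε : 0 < ε) (x₀ : α) :
    ∃ x, f x ≤ f x₀ ∧ ∀ y, f x ≤ f y + ε * dist x y := by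
  set S := ekelandSet f ε
  have hnext : ∀ (n : ℕ) (x : α), ∃ y ∈ S x, f y ≤ sInf (f '' S x) + (1 / 2) ^ n := by
    intro n x
    have hne : (f '' S x).Nonempty := ⟨f x, x, mem_ekelandSet_self x, rfl⟩
    obtain ⟨_, ⟨y, hy, rfl⟩, hlt⟩ :=
      Real.lt_sInf_add_pos hne (by positivity : (0 : ℝ) < (1 / 2) ^ n)
    exact ⟨y, hy, hlt.le⟩
  choose next hnext_mem hnext_le using hnext
  let u : ℕ → α := fun n => Nat.rec x₀ next n
  have hu : ∀ n, u (n + 1) ∈ S (u n) := fun n => hnext_mem n (u n)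
  have hanti : Antitone (S ∘ u) :=
    antitone_nat_of_succ_le fun n => ekelandSet_subset hε.le (hu n)
  have hrad : ∀ n, ∀ y ∈ S (u (n + 1)), dist (u (n + 1)) y ≤ (1 / 2) ^ n / ε := by
    intro n y hy
    rw [le_div_iff₀' hε]
    exact mul_dist_le_of_le_sInf_add hε.le (hbdd.mono (image_subset_range f _)) (hu n)
      (hnext_le n (u n)) hy
  have hrad_tendsto : Tendsto (fun n : ℕ => (1 / 2 : ℝ) ^ n / ε) atTop (𝓝 0) := by
    simpa using (tendsto_pow_atTop_nhds_zero_of_lt_one (r := (1 / 2 : ℝ)) (by norm_num)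
      (by norm_num)).div_const ε
  have htendsto : ∀ y, (∀ n, y ∈ S (u n)) → Tendsto (fun n => u (n + 1)) atTop (𝓝 y) :=
    fun y hy => tendsto_iff_dist_tendsto_zero.2 <|
      squeeze_zero (fun _ => dist_nonneg) (fun n => hrad n y (hy (n + 1))) hrad_tendsto
  obtain ⟨x, hx⟩ := cauchySeq_tendsto_of_complete <| cauchySeq_of_le_tendsto_0' _
    (fun n m hnm => hrad n _ (hanti (Nat.succ_le_succ hnm) (mem_ekelandSet_self _))) hrad_tendsto
  have hxS : ∀ n, x ∈ S (u n) := fun n => (isClosed_ekelandSet hf _).mem_of_tendsto hx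
    (eventually_atTop.2 ⟨n, fun m hm => hanti hm (hu m)⟩)
  refine ⟨x, ?_, fun y => ?_⟩
  · have hx₀ : f x + ε * dist x₀ x ≤ f x₀ := hxS 0
    linarith [mul_nonneg hε.le (dist_nonneg (x := x₀) (y := x))]
  · by_contra! hy
    have hyS : y ∈ S x := le_of_lt hy
    have hxy : x = y := tendsto_nhds_unique hx
      (htendsto y fun n => ekelandSet_subset hε.le (hxS n) hyS)
    simp [hxy] at hy

end Ekeland

lemma IsCompact.exists_pos_forall_dist_lt {α β : Type*} [PseudoMetricSpace α]
    [PseudoMetricSpace β] {S : Set α} (hS : IsCompact S) {F : α → β}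
    (hF : ∀ x ∈ S, ContinuousAt F x) {η : ℝ} (hη : 0 < η) :
    ∃ r > 0, ∀ x ∈ S, ∀ z, dist x z < r → dist (F x) (F z) < η := by
  obtain ⟨r, hr, h⟩ := Metric.mem_uniformity_dist.1
    (hS.uniformContinuousAt_of_continuousAt F hF (Metric.dist_mem_uniformity hη))
  exact ⟨r, hr, fun x hx z hxz => h hxz hx⟩

section Functionals

variable {X : Type*} [NormedAddCommGroup X] [NormedSpace ℝ X]

lemma ContinuousLinearMap.exists_norm_le_one_lt_apply (L : X →L[ℝ] ℝ) {r : ℝ}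
    (hr : r < ‖L‖) : ∃ v : X, ‖v‖ ≤ 1 ∧ r < L v := by
  obtain ⟨v, hv, hrv⟩ := L.exists_lt_apply_of_lt_opNorm hr
  rcases lt_abs.1 hrv with h | h
  · exact ⟨v, hv.le, h⟩
  · exact ⟨-v, by rw [norm_neg]; exact hv.le, by rwa [map_neg]⟩

lemma image_le_add_apply_add_mul_norm {I : X → ℝ} {I' : X → X →L[ℝ] ℝ}
    (hderiv : ∀ u, HasFDerivAt I (I' u) u) {x y : X} {r η : ℝ}
    (hI' : ∀ z ∈ ball x r, ‖I' z - I' x‖ ≤ η) (hy : y ∈ ball x r) :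
    I y ≤ I x + I' x (y - x) + η * ‖y - x‖ := by
  have h := (convex_ball x r).norm_image_sub_le_of_norm_hasFDerivWithin_le'
    (fun z _ => (hderiv z).hasFDerivWithinAt) hI' (mem_ball_self (pos_of_mem_ball hy)) hy
  linarith [(abs_le.1 (Real.norm_eq_abs _ ▸ h)).2]

-- The constraints on `V s` are convex, so local constant choices glue by a partition of unity.
lemma exists_continuous_pseudoGradient {K : Type*} [TopologicalSpace K] [NormalSpace K]
    [ParacompactSpace K] {L : K → X →L[ℝ] ℝ} (hL : Continuous L) {C Z : Set K}
    (hC : IsClosed C) (hZ : IsClosed Z) (hCZ : Disjoint C Z) {δ : ℝ} (hδ : 0 ≤ δ)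
    (hLC : ∀ s ∈ C, δ < ‖L s‖) :
    ∃ V : C(K, X), ∀ s, ‖V s‖ ≤ 1 ∧ 0 ≤ L s (V s) ∧ (s ∈ C → δ ≤ L s (V s)) ∧
      (s ∈ Z → V s = 0) := by
  refine exists_continuous_forall_mem_convex_of_local_const
    (t := fun s => {v | ‖v‖ ≤ 1 ∧ 0 ≤ L s v ∧ (s ∈ C → δ ≤ L s v) ∧ (s ∈ Z → v = 0)})
    (fun s => ?_) (fun s => ?_)
  · rintro v ⟨hv1, hv0, hvC, hvZ⟩ w ⟨hw1, hw0, hwC, hwZ⟩ p q hp hq hpq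
    refine ⟨?_, ?_, fun hs => ?_, fun hs => by simp [hvZ hs, hwZ hs]⟩
    · calc ‖p • v + q • w‖ ≤ p * ‖v‖ + q * ‖w‖ := by
            simpa [norm_smul, abs_of_nonneg hp, abs_of_nonneg hq] using norm_add_le (p • v) (q • w)
        _ ≤ 1 := by nlinarith
    · simpa using add_nonneg (mul_nonneg hp hv0) (mul_nonneg hq hw0)
    · simp only [map_add, map_smul, smul_eq_mul]
      nlinarith [hvC hs, hwC hs]
  · by_cases hs : s ∈ C
    · obtain ⟨v, hv1, hv⟩ := (L s).exists_norm_le_one_lt_apply (hLC s hs)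
      refine ⟨v, ?_⟩
      have hcont_v : Continuous fun y => L y v :=
        (ContinuousLinearMap.apply ℝ ℝ v).continuous.comp hL
      filter_upwards [hZ.isOpen_compl.mem_nhds (hCZ.notMem_of_mem_left hs),
        hcont_v.continuousAt.eventually_const_lt hv] with y hyZ hyv
      exact ⟨hv1, by linarith, fun _ => hyv.le, fun hy => absurd hy hyZ⟩
    · refine ⟨0, ?_⟩
      filter_upwards [hC.isOpen_compl.mem_nhds hs] with y hy
      exact ⟨by simp, by simp, fun hyC => absurd hyC hy, fun _ => rfl⟩

end Functionals

section Paths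

variable {K X : Type*} [TopologicalSpace K] [CompactSpace K]

lemma le_iSup_comp [TopologicalSpace X] {I : X → ℝ} (hI : Continuous I) (g : C(K, X)) (t : K) :
    I (g t) ≤ ⨆ s, I (g s) :=
  le_ciSup (isCompact_range (hI.comp g.continuous)).bddAbove t

lemma lowerSemicontinuous_iSup_comp [TopologicalSpace X] {I : X → ℝ} (hI : Continuous I) :
    LowerSemicontinuous fun g : C(K, X) => ⨆ t, I (g t) :=
  lowerSemicontinuous_ciSup (fun g => (isCompact_range (hI.comp g.continuous)).bddAbove)
    fun t => (hI.comp (continuous_eval_const t)).lowerSemicontinuous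

variable [T2Space K] [Nonempty K] [NormedAddCommGroup X] [NormedSpace ℝ X] {I : X → ℝ}
  {I' : X → X →L[ℝ] ℝ}

-- `h = g - τ • V` for a pseudo-gradient field `V`, with `τ` so small that `I'` varies by less
-- than `δ / 2` along the move.
theorem exists_deformation_lowering_iSup (hderiv : ∀ u, HasFDerivAt I (I' u) u)
    (hcont : Continuous I') (g : C(K, X)) {Z : Set K} (hZ : IsClosed Z) {δ θ : ℝ}
    (hδ : 0 < δ) (hθ : 0 < θ) (hgrad : ∀ s, (⨆ t, I (g t)) - θ ≤ I (g s) → δ < ‖I' (g s)‖)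
    (hZlow : ∀ s ∈ Z, I (g s) < (⨆ t, I (g t)) - θ) :
    ∃ τ > 0, ∃ h : C(K, X), EqOn h g Z ∧ dist h g ≤ τ ∧
      (⨆ t, I (h t)) ≤ (⨆ t, I (g t)) - τ * δ / 2 := by
  have hI : Continuous I := continuous_iff_continuousAt.2 fun u => (hderiv u).continuousAt
  set Φ := ⨆ t, I (g t)
  set C := {s | Φ - θ ≤ I (g s)}
  have hC : IsClosed C := isClosed_le continuous_const (hI.comp g.continuous)
  have hCZ : Disjoint C Z := disjoint_left.2 fun s hsC hsZ => (hZlow s hsZ).not_ge hsC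
  obtain ⟨V, hV⟩ := exists_continuous_pseudoGradient (L := fun s => I' (g s))
    (hcont.comp g.continuous) hC hZ hCZ hδ.le hgrad
  obtain ⟨r, hr, hI'r⟩ := (isCompact_range g.continuous).exists_pos_forall_dist_lt
    (fun x _ => hcont.continuousAt) (half_pos hδ)
  have hI'near : ∀ s, ∀ z ∈ ball (g s) r, ‖I' z - I' (g s)‖ ≤ δ / 2 := fun s z hz => by
    rw [← dist_eq_norm, dist_comm]
    exact (hI'r _ (mem_range_self s) z (by rwa [dist_comm, ← mem_ball])).le
  set τ := min (r / 2) (θ / δ)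
  have hτ : 0 < τ := lt_min (half_pos hr) (div_pos hθ hδ)
  have hτr : τ < r := (min_le_left _ _).trans_lt (half_lt_self hr)
  have hτθ : τ * δ ≤ θ := (le_div_iff₀ hδ).1 (min_le_right _ _)
  have hnorm : ∀ s, ‖τ • V s‖ ≤ τ := fun s => by
    rw [norm_smul, Real.norm_of_nonneg hτ.le]
    exact mul_le_of_le_one_right hτ.le (hV s).1
  refine ⟨τ, hτ, g - τ • V, fun s hs => by simp [(hV s).2.2.2 hs], ?_, ?_⟩
  · refine (ContinuousMap.dist_le hτ.le).2 fun s => ?_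
    simpa [dist_eq_norm] using hnorm s
  · refine ciSup_le fun s => ?_
    obtain ⟨-, hV0, hVC, -⟩ := hV s
    have hball : g s - τ • V s ∈ ball (g s) r := by
      simpa [dist_eq_norm] using (hnorm s).trans_lt hτr
    have hstep := image_le_add_apply_add_mul_norm hderiv (hI'near s) hball
    have hgs : I (g s) ≤ Φ := le_iSup_comp hI g s
    have herr : δ / 2 * ‖τ • V s‖ ≤ δ / 2 * τ :=
      mul_le_mul_of_nonneg_left (hnorm s) (half_pos hδ).le
    simp only [sub_sub_cancel_left, map_neg, map_smul, smul_eq_mul, norm_neg] at hstep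
    simp only [ContinuousMap.sub_apply, ContinuousMap.smul_apply]
    by_cases hs : s ∈ C
    · have hdesc : τ * δ ≤ τ * I' (g s) (V s) := mul_le_mul_of_nonneg_left (hVC hs) hτ.le
      linarith [show Φ - θ ≤ I (g s) from hs]
    · have hdesc : 0 ≤ τ * I' (g s) (V s) := mul_nonneg hτ.le hV0
      linarith [show I (g s) < Φ - θ from not_le.1 hs]

end Paths

section MinimaxPrinciple

variable {X : Type*} [NormedAddCommGroup X] [NormedSpace ℝ X] {I : X → ℝ}
  {I' : X → X →L[ℝ] ℝ}

theorem exists_abs_sub_le_norm_le_of_isGLB {K : Type*} [TopologicalSpace K] [CompactSpace K]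
    [T2Space K] [Nonempty K] [CompleteSpace X] (hderiv : ∀ u, HasFDerivAt I (I' u) u)
    (hcont : Continuous I') {γ : C(K, X)} {Z : Set K} (hZ : IsClosed Z) {b c : ℝ}
    (hc : IsGLB ((fun g : C(K, X) => ⨆ t, I (g t)) '' {g | EqOn g γ Z}) c)
    (hγZ : ∀ s ∈ Z, I (γ s) ≤ b) (hbc : b < c) {ε : ℝ} (hε : 0 < ε) :
    ∃ u, |I u - c| ≤ ε ∧ ‖I' u‖ ≤ ε := by
  have hI : Continuous I := continuous_iff_continuousAt.2 fun u => (hderiv u).continuousAt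
  by_contra! hfar
  set Γ : Set C(K, X) := {g | EqOn g γ Z}
  have hΓ : IsClosed Γ := by
    simp only [Γ, EqOn, ofPred_forall]
    exact isClosed_biInter fun s _ => isClosed_eq (continuous_eval_const s) continuous_const
  have : CompleteSpace Γ := hΓ.completeSpace_coe
  set Φ : Γ → ℝ := fun g => ⨆ t, I (g.1 t)
  have hΦc : ∀ g, c ≤ Φ g := fun g => hc.1 ⟨g.1, g.2, rfl⟩
  obtain ⟨_, ⟨g₀, hg₀, rfl⟩, -, hg₀c⟩ := hc.exists_between (lt_add_of_pos_right c hε)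
  have hΦ : LowerSemicontinuous Φ :=
    (lowerSemicontinuous_iSup_comp hI).comp continuous_subtype_val
  obtain ⟨g, hgg₀, hgmin⟩ := hΦ.exists_le_forall_le_add_mul_dist ⟨c, forall_mem_range.2 hΦc⟩
    (by positivity : 0 < ε / 3) (⟨g₀, hg₀⟩ : Γ)
  set θ := min ε ((c - b) / 2)
  have hθ : 0 < θ := lt_min hε (half_pos (sub_pos.2 hbc))
  have hgc := hΦc g
  obtain ⟨τ, hτ, h, hhg, hdist, hdesc⟩ :=
    exists_deformation_lowering_iSup hderiv hcont g.1 hZ hε hθ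
    (fun s hs => hfar _ (abs_le.2 ⟨by linarith [min_le_left ε ((c - b) / 2)],
      by linarith [le_iSup_comp hI g.1 s]⟩))
    (fun s hs => by rw [g.2 hs]; linarith [hγZ s hs, min_le_right ε ((c - b) / 2)])
  have hslope := hgmin ⟨h, hhg.trans g.2⟩
  rw [Subtype.dist_eq, dist_comm] at hslope
  have := mul_le_mul_of_nonneg_left hdist (by positivity : (0 : ℝ) ≤ ε / 3)
  linarith [mul_pos hτ hε]

end MinimaxPrinciple

theorem exists_critical_point_of_palaisSmale {X : Type*} [NormedAddCommGroup X]
    [NormedSpace ℝ X] {I : X → ℝ} {I' : X → X →L[ℝ] ℝ} (hI : Continuous I)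
    (hcont : Continuous I')
    (hPS : ∀ u : ℕ → X,
      (∃ M : ℝ, ∀ k, |I (u k)| ≤ M) →
      Tendsto (fun k => ‖I' (u k)‖) atTop (𝓝 0) →
      ∃ (w : X) (φ : ℕ → ℕ), StrictMono φ ∧ Tendsto (u ∘ φ) atTop (𝓝 w))
    {c : ℝ} (halmost : ∀ ε > 0, ∃ u, |I u - c| ≤ ε ∧ ‖I' u‖ ≤ ε) :
    ∃ w, I w = c ∧ I' w = 0 := by
  choose u hu using fun k : ℕ => halmost (1 / (k + 1)) Nat.one_div_pos_of_nat
  have hε : Tendsto (fun k : ℕ => 1 / ((k : ℝ) + 1)) atTop (𝓝 0) :=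
    tendsto_one_div_add_atTop_nhds_zero_nat
  have hIu : Tendsto (fun k => I (u k)) atTop (𝓝 c) :=
    tendsto_iff_norm_sub_tendsto_zero.2 <|
      squeeze_zero (fun _ => norm_nonneg _) (fun k => (hu k).1) hε
  have hI'u : Tendsto (fun k => ‖I' (u k)‖) atTop (𝓝 0) :=
    squeeze_zero (fun _ => norm_nonneg _) (fun k => (hu k).2) hε
  have hbdd : ∀ k, |I (u k)| ≤ |c| + 1 := fun k => by
    have : 1 / ((k : ℝ) + 1) ≤ 1 := div_le_one_of_le₀ (by simp) (by positivity)
    linarith [abs_sub_abs_le_abs_sub (I (u k)) c, (hu k).1]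
  obtain ⟨w, φ, hφ, hw⟩ := hPS u ⟨|c| + 1, hbdd⟩ hI'u
  exact ⟨w, tendsto_nhds_unique ((hI.tendsto w).comp hw) (hIu.comp hφ.tendsto_atTop),
    tendsto_nhds_unique ((hcont.tendsto w).comp hw)
      (tendsto_zero_iff_norm_tendsto_zero.2 (hI'u.comp hφ.tendsto_atTop))⟩

/-- **Mountain Pass Theorem.** Let `X` be a real Banach space and `I : X → ℝ` a
continuously Fréchet differentiable functional with `I 0 = 0` satisfying the geometric
conditions (G1), (G2) and the Palais–Smale condition. Then
`c := inf over paths g from 0 to e of max_{t ∈ [0,1]} I (g t)` is a critical value of `I`. -/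
theorem mountain_pass_theorem
    {X : Type*} [NormedAddCommGroup X] [NormedSpace ℝ X] [CompleteSpace X]
    (I : X → ℝ) (I' : X → X →L[ℝ] ℝ)
    (hderiv : ∀ u : X, HasFDerivAt I (I' u) u)
    (hcont : Continuous I')
    (hI0 : I 0 = 0)
    (ρ a : ℝ) (hρ : 0 < ρ) (ha : 0 < a)
    (hG1 : ∀ u : X, ‖u‖ = ρ → a ≤ I u)
    (e : X) (he : ρ < ‖e‖) (hIe : I e ≤ 0)
    (hPS : ∀ u : ℕ → X,
      (∃ M : ℝ, ∀ k, |I (u k)| ≤ M) →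
      Tendsto (fun k => ‖I' (u k)‖) atTop (𝓝 0) →
      ∃ (w : X) (φ : ℕ → ℕ), StrictMono φ ∧ Tendsto (u ∘ φ) atTop (𝓝 w)) :
    ∃ w : X,
      I w = sInf {y : ℝ | ∃ g : C(Set.Icc (0:ℝ) 1, X),
        g ⟨0, by norm_num⟩ = 0 ∧ g ⟨1, by norm_num⟩ = e ∧
        y = ⨆ t : Set.Icc (0:ℝ) 1, I (g t)} ∧
      I' w = 0 := by
  have hI : Continuous I := continuous_iff_continuousAt.2 fun u => (hderiv u).continuousAt
  let γ : C(Icc (0 : ℝ) 1, X) := .mk (fun t => (t : ℝ) • e) (by fun_prop)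
  let Z : Set (Icc (0 : ℝ) 1) := {0, 1}
  let Γ : Set C(Icc (0 : ℝ) 1, X) := {g | EqOn g γ Z}
  let Φ : C(Icc (0 : ℝ) 1, X) → ℝ := fun g => ⨆ t, I (g t)
  have hpaths : {y : ℝ | ∃ g : C(Set.Icc (0:ℝ) 1, X),
      g ⟨0, by norm_num⟩ = 0 ∧ g ⟨1, by norm_num⟩ = e ∧ y = ⨆ t : Set.Icc (0:ℝ) 1, I (g t)} =
      Φ '' Γ := by
    ext y
    simp [Φ, Γ, Z, γ, EqOn, eq_comm (a := y), and_assoc]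
  have hlow : ∀ g ∈ Γ, a ≤ Φ g := by
    intro g hg
    have hg0 : g 0 = 0 := by simpa [γ] using hg (by simp [Z] : (0 : Icc (0 : ℝ) 1) ∈ Z)
    have hg1 : g 1 = e := by simpa [γ] using hg (by simp [Z] : (1 : Icc (0 : ℝ) 1) ∈ Z)
    obtain ⟨t, ht⟩ := intermediate_value_univ 0 1 (continuous_norm.comp g.continuous)
      (show ρ ∈ Icc ‖g 0‖ ‖g 1‖ by simpa [hg0, hg1] using ⟨hρ.le, he.le⟩)
    exact (hG1 _ ht).trans (le_iSup_comp hI g t)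
  have hc : IsGLB (Φ '' Γ) (sInf (Φ '' Γ)) :=
    isGLB_csInf (Set.Nonempty.image Φ ⟨γ, fun _ _ => rfl⟩) ⟨a, forall_mem_image.2 hlow⟩
  have hγZ : ∀ s ∈ Z, I (γ s) ≤ 0 := by
    rintro s (rfl | rfl) <;> simp [γ, hI0, hIe]
  rw [hpaths]
  exact exists_critical_point_of_palaisSmale hI hcont hPS fun ε hε =>
    exists_abs_sub_le_norm_le_of_isGLB hderiv hcont (toFinite Z).isClosed hc hγZ
      (ha.trans_le (hc.2 (forall_mem_image.2 hlow))) hε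
end

section
/- Let n ≥ 1, let γ ∈ L¹(ℝⁿ) be even (γ(−z) = γ(z) for all z), and let u, v ∈ L²(ℝⁿ). Then ∫_{ℝⁿ} (𝓛u)(x) v(x) dx = −(1/2) ∬_{ℝⁿ×ℝⁿ} (u(y) − u(x)) γ(x − y) (v(y) − v(x)) dy dx, and both sides are finite (nonlocal Green's identity). -/
/-!
Write `H(x, y) = (u(y) - u(x)) γ(x - y) v(x)`, so that `∫ 𝓛u · v = ∬ H` by Fubini. Since `γ` is
even, the integrand of the bilinear form is `-H(y, x) - H(x, y)`, and swapping the variables gives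
`∬ (u(y) - u(x)) γ(x - y) (v(y) - v(x)) = -2 ∬ H`.

Integrability comes from `2|ab| ≤ a² + b²`: both integrands are bounded by
`(w(x) + w(y)) |γ(x - y)|` with `w = u² + v² ∈ L¹`, which is integrable on the product
like the integrand of the convolution of two `L¹` functions.
-/

open MeasureTheory

/-- The nonlocal operator `𝓛u(x) = ∫ (u(y) - u(x)) γ(x - y) dy`. -/
noncomputable def nonlocalOp (n : ℕ) (γ u : EuclideanSpace ℝ (Fin n) → ℝ)
    (x : EuclideanSpace ℝ (Fin n)) : ℝ :=
  ∫ y, (u y - u x) * γ (x - y)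

theorem abs_sub_mul_mul_le (a b c d e : ℝ) :
    |(b - a) * c * d| ≤ (a ^ 2 + d ^ 2 + (b ^ 2 + e ^ 2)) * |c| := by
  rw [abs_mul, abs_mul, mul_right_comm]
  gcongr
  nlinarith [two_mul_le_add_sq |b - a| |d|, sq_abs (b - a), sq_abs d, sq_nonneg (a + b),
    sq_nonneg e]

theorem abs_sub_mul_mul_sub_le (a b c d e : ℝ) :
    |(b - a) * c * (e - d)| ≤ (a ^ 2 + d ^ 2 + (b ^ 2 + e ^ 2)) * |c| := by
  rw [abs_mul, abs_mul, mul_right_comm]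
  gcongr
  nlinarith [two_mul_le_add_sq |b - a| |e - d|, sq_abs (b - a), sq_abs (e - d),
    sq_nonneg (a + b), sq_nonneg (d + e)]

section NonlocalForm

variable {G : Type*} [AddGroup G] [MeasurableSpace G] [MeasurableAdd₂ G] [MeasurableNeg G]
  {μ : Measure G} [SFinite μ] [μ.IsAddRightInvariant]

theorem aestronglyMeasurable_comp_sub {γ : G → ℝ} (hγ : AEStronglyMeasurable γ μ) :
    AEStronglyMeasurable (fun p : G × G => γ (p.1 - p.2)) (μ.prod μ) :=
  hγ.comp_quasiMeasurePreserving (quasiMeasurePreserving_sub_of_right_invariant μ μ)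

variable [μ.IsNegInvariant]

theorem integrable_add_mul_comp_sub {w γ : G → ℝ} (hw : Integrable w μ) (hγ : Integrable γ μ) :
    Integrable (fun p : G × G => (w p.1 + w p.2) * γ (p.1 - p.2)) (μ.prod μ) := by
  have hsnd : Integrable (fun p : G × G => w p.2 * γ (p.1 - p.2)) (μ.prod μ) :=
    hw.convolution_integrand (ContinuousLinearMap.mul ℝ ℝ) hγ
  have hfst : Integrable (fun p : G × G => w p.1 * γ (p.1 - p.2)) (μ.prod μ) := by
    simpa [Function.comp_def, neg_sub] using
      (hw.convolution_integrand (ContinuousLinearMap.mul ℝ ℝ) hγ.comp_neg).swap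
  simpa only [Pi.add_def, ← add_mul] using hfst.add hsnd

variable {u v γ : G → ℝ}

theorem integrable_of_abs_le_sq_add_sq_mul (hu : MemLp u 2 μ) (hv : MemLp v 2 μ)
    (hγ : Integrable γ μ) {F : G × G → ℝ} (hF : AEStronglyMeasurable F (μ.prod μ))
    (hle : ∀ p, |F p| ≤ (u p.1 ^ 2 + v p.1 ^ 2 + (u p.2 ^ 2 + v p.2 ^ 2)) * |γ (p.1 - p.2)|) :
    Integrable F (μ.prod μ) :=
  (integrable_add_mul_comp_sub (hu.integrable_sq.add hv.integrable_sq) hγ.abs).mono' hF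
    (ae_of_all _ hle)

theorem integrable_sub_mul_comp_sub_mul (hu : MemLp u 2 μ) (hv : MemLp v 2 μ)
    (hγ : Integrable γ μ) :
    Integrable (fun p : G × G => (u p.2 - u p.1) * γ (p.1 - p.2) * v p.1) (μ.prod μ) :=
  integrable_of_abs_le_sq_add_sq_mul hu hv hγ
    (((hu.1.comp_snd.sub hu.1.comp_fst).mul (aestronglyMeasurable_comp_sub hγ.1)).mul
      hv.1.comp_fst)
    fun p => abs_sub_mul_mul_le _ _ _ _ (v p.2)

theorem integrable_sub_mul_comp_sub_mul_sub (hu : MemLp u 2 μ) (hv : MemLp v 2 μ)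
    (hγ : Integrable γ μ) :
    Integrable (fun p : G × G => (u p.2 - u p.1) * γ (p.1 - p.2) * (v p.2 - v p.1))
      (μ.prod μ) :=
  integrable_of_abs_le_sq_add_sq_mul hu hv hγ
    (((hu.1.comp_snd.sub hu.1.comp_fst).mul (aestronglyMeasurable_comp_sub hγ.1)).mul
      (hv.1.comp_snd.sub hv.1.comp_fst))
    fun _ => abs_sub_mul_mul_sub_le _ _ _ _ _

end NonlocalForm

theorem integral_prod_sub_mul_comp_sub_mul_sub {G : Type*} [AddGroup G] [MeasurableSpace G]
    {μ : Measure G} [SFinite μ] {u v γ : G → ℝ} (hγ : Function.Even γ)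
    (hH : Integrable (fun p : G × G => (u p.2 - u p.1) * γ (p.1 - p.2) * v p.1) (μ.prod μ)) :
    ∫ p, (u p.2 - u p.1) * γ (p.1 - p.2) * (v p.2 - v p.1) ∂μ.prod μ =
      -2 * ∫ p, (u p.2 - u p.1) * γ (p.1 - p.2) * v p.1 ∂μ.prod μ := by
  have hK_eq_neg_swap : ∀ p : G × G, (u p.2 - u p.1) * γ (p.1 - p.2) * v p.2 =
      -((u p.1 - u p.2) * γ (p.2 - p.1) * v p.2) := fun p => by
    rw [← neg_sub p.1, hγ]
    ring
  have hK : Integrable (fun p : G × G => (u p.2 - u p.1) * γ (p.1 - p.2) * v p.2) (μ.prod μ) := by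
    simpa only [hK_eq_neg_swap, Function.comp_def, Pi.neg_def, Prod.fst_swap, Prod.snd_swap] using
      hH.swap.neg
  have hK_integral : ∫ p, (u p.2 - u p.1) * γ (p.1 - p.2) * v p.2 ∂μ.prod μ =
      -∫ p, (u p.2 - u p.1) * γ (p.1 - p.2) * v p.1 ∂μ.prod μ := by
    simp only [hK_eq_neg_swap, integral_neg]
    exact congrArg _ (integral_prod_swap fun p : G × G => (u p.2 - u p.1) * γ (p.1 - p.2) * v p.1)
  calc ∫ p, (u p.2 - u p.1) * γ (p.1 - p.2) * (v p.2 - v p.1) ∂μ.prod μ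
      = ∫ p, ((u p.2 - u p.1) * γ (p.1 - p.2) * v p.2
          - (u p.2 - u p.1) * γ (p.1 - p.2) * v p.1) ∂μ.prod μ := by
        simp only [mul_sub]
    _ = -2 * ∫ p, (u p.2 - u p.1) * γ (p.1 - p.2) * v p.1 ∂μ.prod μ := by
        rw [integral_sub hK hH, hK_integral]
        ring

theorem nonlocal_green_identity_general
    (n : ℕ)
    (γ : EuclideanSpace ℝ (Fin n) → ℝ)
    (hγ : Integrable γ)
    (hγeven : ∀ z, γ (-z) = γ z)
    (u v : EuclideanSpace ℝ (Fin n) → ℝ)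
    (hu : MemLp u 2 (volume : Measure (EuclideanSpace ℝ (Fin n))))
    (hv : MemLp v 2 (volume : Measure (EuclideanSpace ℝ (Fin n)))) :
    Integrable (fun x => nonlocalOp n γ u x * v x) ∧
    Integrable
      (fun p : EuclideanSpace ℝ (Fin n) × EuclideanSpace ℝ (Fin n) =>
        (u p.2 - u p.1) * γ (p.1 - p.2) * (v p.2 - v p.1))
      ((volume : Measure (EuclideanSpace ℝ (Fin n))).prod volume) ∧
    (∫ x, nonlocalOp n γ u x * v x) =
      -(1/2) * ∫ x, ∫ y, (u y - u x) * γ (x - y) * (v y - v x) := by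
  have hH := integrable_sub_mul_comp_sub_mul hu hv hγ
  have hF := integrable_sub_mul_comp_sub_mul_sub hu hv hγ
  have hLv : (fun x => nonlocalOp n γ u x * v x) =
      fun x => ∫ y, (u y - u x) * γ (x - y) * v x := by
    ext x
    rw [nonlocalOp, integral_mul_const]
  refine ⟨hLv ▸ hH.integral_prod_left, hF, ?_⟩
  rw [hLv, ← integral_prod _ hH, ← integral_prod _ hF,
    integral_prod_sub_mul_comp_sub_mul_sub hγeven hH]
  ring

/-- **Nonlocal Green's identity.** For an even kernel `γ ∈ L¹(ℝⁿ)` and `u, v ∈ L²(ℝⁿ)`,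
`∫ 𝓛u · v = -(1/2) ∬ (u(y)-u(x)) γ(x-y) (v(y)-v(x)) dy dx`, and both sides are finite
(i.e. the corresponding integrands are integrable). -/
theorem nonlocal_green_identity
    (n : ℕ) (hn : 1 ≤ n)
    (γ : EuclideanSpace ℝ (Fin n) → ℝ)
    (hγ : Integrable γ)
    (hγeven : ∀ z, γ (-z) = γ z)
    (u v : EuclideanSpace ℝ (Fin n) → ℝ)
    (hu : MemLp u 2 (volume : Measure (EuclideanSpace ℝ (Fin n))))
    (hv : MemLp v 2 (volume : Measure (EuclideanSpace ℝ (Fin n)))) :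
    Integrable (fun x => nonlocalOp n γ u x * v x) ∧
    Integrable
      (fun p : EuclideanSpace ℝ (Fin n) × EuclideanSpace ℝ (Fin n) =>
        (u p.2 - u p.1) * γ (p.1 - p.2) * (v p.2 - v p.1))
      ((volume : Measure (EuclideanSpace ℝ (Fin n))).prod volume) ∧
    (∫ x, nonlocalOp n γ u x * v x) =
      -(1/2) * ∫ x, ∫ y, (u y - u x) * γ (x - y) * (v y - v x) :=
  nonlocal_green_identity_general n γ hγ hγeven u v hu hv
end
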